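/- Let δ be a logarithmic connection, singular over D, on a holomorphic vector bundle E over a compact Riemann surface X, and let E_⋆ be the parabolic bundle on E induced by the residues of δ, with weights at x_j given by the fractional parts λ^i_j of the real parts of the eigenvalues of Res(δ)(x_j). Then par-deg(E_⋆) = deg(E) + Σ_{j=1}^n Σ_{i=1}^{n_j} λ^i_j · dim(F^i_j) is an integer, where F^i_j is the sum of generalized eigenspaces of Res(δ)(x_j) for eigenvalues with fractional part of real part equal to λ^i_j. -/
import Mathlib


/-!
STATEMENT 15. Let `δ` be a logarithmic connection, singular over
`D = {x_1, …, x_n}`, on a holomorphic vector bundle `E` over a compact Riemann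
surface `X`, and let `E_⋆` be the parabolic bundle on `E` induced by the
residues of `δ`, with weights at `x_j` the fractional parts `λ^i_j` of the
real parts of the eigenvalues of `Res(δ)(x_j)`.  Then
`par-deg(E_⋆) = deg(E) + Σ_j Σ_i λ^i_j · dim(F^i_j)` is an integer, where
`F^i_j` is the sum of generalized eigenspaces of `Res(δ)(x_j)` for eigenvalues
with fractional part of real part equal to `λ^i_j`.

Here the eigenvalues of the residue `Res(δ)(x_j)` are recorded as a multiset
`eig j` of complex numbers, each eigenvalue occurring with multiplicity the
dimension of its generalized eigenspace; thus
`Σ_i λ^i_j dim(F^i_j) = Σ_{μ ∈ eig j} Int.fract(μ.re)` and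
`trace(Res(δ)(x_j)) = (eig j).sum`.  The input from the geometry is Ohtsuki's
theorem `deg(E) + Σ_j trace(Res(δ)(x_j)) = 0`, taken as a hypothesis.
-/

theorem parabolic_degree_of_connection_is_integer
    -- the number of points of `D` and the degree of `E`
    (n : ℕ) (degE : ℤ)
    -- `eig j` : the multiset of eigenvalues of the residue `Res(δ)(x_j)`, each
    -- counted with multiplicity the dimension of its generalized eigenspace
    (eig : Fin n → Multiset ℂ)
    -- Ohtsuki's theorem: `deg(E) + Σ_{j=1}^n trace(Res(δ)(x_j)) = 0`
    (hOhtsuki : (degE : ℂ) + ∑ j : Fin n, (eig j).sum = 0) :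
    -- `par-deg(E_⋆) = deg(E) + Σ_j Σ_i λ^i_j dim(F^i_j)
    --              = deg(E) + Σ_j Σ_{μ ∈ eig j} {Re(μ)}` is an integer
    ∃ m : ℤ,
      (degE : ℝ) + ∑ j : Fin n, ((eig j).map (fun μ => Int.fract μ.re)).sum
        = (m : ℝ) := by
  refine ⟨-∑ j : Fin n, ((eig j).map (fun μ => ⌊μ.re⌋)).sum, ?_⟩
  have hre : (degE : ℝ) + ∑ j : Fin n, ((eig j).map Complex.re).sum = 0 := by
    have h0 := congrArg Complex.re hOhtsuki
    rw [Complex.add_re, Complex.re_sum, Complex.intCast_re, Complex.zero_re] at h0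
    have h1 : ∀ j : Fin n, ((eig j).map Complex.re).sum = ((eig j).sum).re :=
      fun j => (Complex.reAddGroupHom.map_multiset_sum (eig j)).symm
    simp only [h1]
    exact h0
  have key : ∀ j : Fin n,
      ((eig j).map (fun μ => Int.fract μ.re)).sum
        = ((eig j).map Complex.re).sum - (((eig j).map (fun μ => ⌊μ.re⌋)).sum : ℝ) := by
    intro j
    induction (eig j) using Multiset.induction with
    | empty => simp
    | cons a s ih =>
      simp only [Multiset.map_cons, Multiset.sum_cons, Int.cast_add, ih]
      rw [Int.fract]
      ring
  simp only [key]
  push_cast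
  rw [Finset.sum_sub_distrib]
  linarith [hre]
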